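/- arXiv:2112.14698 — 3 statements merged into one kernel-verified Lean document; each statement's English description precedes it below -/
import Mathlib

section
/- The optimal covariance matrix minimizing the stealth attack cost F(Σ_AA) = (1/2)(tr(Σ_YY^{-1} Σ_AA) - log det(Σ_AA + σ²I) + log det(Σ_YY)), where Σ_YY = H Σ_XX Hᵀ + σ²I, over positive semidefinite matrices Σ_AA, is Σ_AA* = H Σ_XX Hᵀ. -/
/-!
With `T = S + σ²I`, one computes `F S - F (H Σ_XX Hᵀ) = ½ (tr (Σ_YY⁻¹ T) - log det (Σ_YY⁻¹ T) - m)`.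
This is nonnegative: `Σ_YY⁻¹ T` has the same trace and determinant as the positive definite
matrix `N = Σ_YY^{-1/2} T Σ_YY^{-1/2}`, and `log λ ≤ λ - 1` on each eigenvalue `λ` of `N`.
-/

open Matrix

namespace Matrix

variable {ι : Type*} [Fintype ι] [DecidableEq ι]

lemma PosDef.log_det_le_trace_sub_card {M : Matrix ι ι ℝ} (hM : M.PosDef) :
    Real.log M.det ≤ M.trace - Fintype.card ι := by
  have hpos := hM.eigenvalues_pos
  rw [hM.isHermitian.det_eq_prod_eigenvalues, hM.isHermitian.trace_eq_sum_eigenvalues]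
  simp only [RCLike.ofReal_real_eq_id, id_eq]
  rw [Real.log_prod fun i _ => (hpos i).ne']
  calc ∑ i, Real.log (hM.isHermitian.eigenvalues i)
      ≤ ∑ i, (hM.isHermitian.eigenvalues i - 1) :=
        Finset.sum_le_sum fun i _ => Real.log_le_sub_one_of_pos (hpos i)
    _ = ∑ i, hM.isHermitian.eigenvalues i - Fintype.card ι := by
        simp [Finset.sum_sub_distrib]

open scoped MatrixOrder in
lemma PosDef.log_det_sub_log_det_le_trace_inv_mul_sub_card {P Q : Matrix ι ι ℝ}
    (hP : P.PosDef) (hQ : Q.PosDef) :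
    Real.log Q.det - Real.log P.det ≤ (P⁻¹ * Q).trace - Fintype.card ι := by
  set R := CFC.sqrt P
  have hRR : R * R = P := CFC.sqrt_mul_sqrt_self P hP.posSemidef.nonneg
  have hRsymm : star R⁻¹ = R⁻¹ := by
    rw [star_eq_conjTranspose, conjTranspose_nonsing_inv,
      (CFC.sqrt_nonneg P).posSemidef.isHermitian.eq]
  have hRunit : IsUnit R := isUnit_of_mul_isUnit_left (hRR ▸ hP.isUnit)
  have hN : (R⁻¹ * Q * R⁻¹).PosDef := by
    simpa [hRsymm] using
      (isUnit_nonsing_inv_iff.mpr hRunit).posDef_star_right_conjugate_iff.mpr hQ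
  have hdet : (R⁻¹ * Q * R⁻¹).det = Q.det / P.det := by
    rw [← hRR, det_mul, det_mul, det_mul, det_nonsing_inv, Ring.inverse_eq_inv']
    ring
  have htrace : (R⁻¹ * Q * R⁻¹).trace = (P⁻¹ * Q).trace := by
    rw [trace_mul_cycle, ← Matrix.mul_inv_rev, hRR]
  simpa only [hdet, htrace, Real.log_div hQ.det_pos.ne' hP.det_pos.ne'] using
    hN.log_det_le_trace_sub_card

end Matrix

/-- The optimal covariance matrix minimizing the stealth attack cost
`F(Σ_AA) = (1/2)(tr(Σ_YY⁻¹ Σ_AA) - log det(Σ_AA + σ²I) + log det Σ_YY)`,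
with `Σ_YY = H Σ_XX Hᵀ + σ²I`, over positive semidefinite matrices is `H Σ_XX Hᵀ`. -/
theorem stmt0 {m n : ℕ} (H : Matrix (Fin m) (Fin n) ℝ)
    (Sxx : Matrix (Fin n) (Fin n) ℝ) (hSxx : Sxx.PosSemidef)
    (σ : ℝ) (hσ : 0 < σ)
    (Syy : Matrix (Fin m) (Fin m) ℝ)
    (hSyy : Syy = H * Sxx * Hᵀ + σ ^ 2 • (1 : Matrix (Fin m) (Fin m) ℝ))
    (F : Matrix (Fin m) (Fin m) ℝ → ℝ)
    (hF : ∀ S, F S = (1 / 2) * ((Syy⁻¹ * S).trace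
      - Real.log (S + σ ^ 2 • (1 : Matrix (Fin m) (Fin m) ℝ)).det
      + Real.log Syy.det)) :
    ∀ S : Matrix (Fin m) (Fin m) ℝ, S.PosSemidef → F (H * Sxx * Hᵀ) ≤ F S := by
  intro S hS
  have hnoise : (σ ^ 2 • (1 : Matrix (Fin m) (Fin m) ℝ)).PosDef := PosDef.one.smul (by positivity)
  have hsignal : (H * Sxx * Hᵀ).PosSemidef := by
    simpa [conjTranspose_eq_transpose_of_trivial] using hSxx.mul_mul_conjTranspose_same H
  have hSyyPD : Syy.PosDef := hSyy ▸ hnoise.posSemidef_add hsignal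
  have key := hSyyPD.log_det_sub_log_det_le_trace_inv_mul_sub_card (hnoise.posSemidef_add hS)
  have hsignal_eq : H * Sxx * Hᵀ = Syy - σ ^ 2 • 1 := eq_sub_of_add_eq hSyy.symm
  rw [hF, hF, ← hSyy, hsignal_eq]
  simp only [Matrix.mul_sub, Matrix.mul_add, Matrix.mul_smul, Matrix.mul_one,
    nonsing_inv_mul _ hSyyPD.det_pos.ne'.isUnit, trace_sub, trace_add, trace_smul, trace_one,
    smul_eq_mul, Fintype.card_fin] at key ⊢
  linarith
end

section
/- For a nonnegative random variable T with E[T] < ∞, γ > 0, and β > 0, the equation βη - E[1/(1 + γηT)] = β - 1 has a unique solution η in the interval (0, 1]. -/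
open MeasureTheory Set

/- The map `η ↦ β η - E[1/(1 + γ η T)]` is continuous and strictly increasing on `[0, 1]`: the
expectation is continuous by dominated convergence (the integrand lies in `[0, 1]`) and
nonincreasing in `η`. It equals `-1 < β - 1` at `η = 0` and is at least `β - 1` at `η = 1`, so the
intermediate value theorem gives a root in `(0, 1]`, unique by strict monotonicity. -/

theorem existsUnique_mem_Ioc_mul_sub_eq_sub_one {φ : ℝ → ℝ} {β : ℝ} (hβ : 0 < β)
    (hcont : ContinuousOn φ (Icc 0 1)) (hanti : AntitoneOn φ (Icc 0 1)) (hφ0 : φ 0 = 1) :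
    ∃! η : ℝ, η ∈ Ioc (0 : ℝ) 1 ∧ β * η - φ η = β - 1 := by
  set f : ℝ → ℝ := fun η => β * η - φ η
  have hmono : StrictMonoOn f (Icc 0 1) := fun a ha b hb hab => by
    have := hanti ha hb hab.le
    have := mul_lt_mul_of_pos_left hab hβ
    simp only [f]
    linarith
  have hf0 : f 0 = -1 := by simp [f, hφ0]
  have hf1 : β - 1 ≤ f 1 := by
    have := hanti (left_mem_Icc.2 zero_le_one) (right_mem_Icc.2 zero_le_one) zero_le_one
    simp only [f]
    linarith
  have hfcont : ContinuousOn f (Icc 0 1) := (continuousOn_const.mul continuousOn_id).sub hcont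
  obtain ⟨η, hη, hfη⟩ := intermediate_value_Icc zero_le_one hfcont ⟨by linarith, hf1⟩
  have hη0 : η ≠ 0 := by
    rintro rfl
    linarith [hfη.symm.trans hf0]
  refine ⟨η, ⟨⟨lt_of_le_of_ne hη.1 (Ne.symm hη0), hη.2⟩, hfη⟩, ?_⟩
  rintro y ⟨hy, hfy⟩
  exact hmono.injOn (Ioc_subset_Icc_self hy) hη (hfy.trans hfη.symm)

theorem one_le_one_add_mul {s x : ℝ} (hs : 0 ≤ s) (hx : 0 ≤ x) : 1 ≤ 1 + s * x :=
  le_add_of_nonneg_right (mul_nonneg hs hx)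

theorem norm_inv_one_add_mul_le_one {s x : ℝ} (hs : 0 ≤ s) (hx : 0 ≤ x) :
    ‖(1 + s * x)⁻¹‖ ≤ 1 := by
  have h := one_le_one_add_mul hs hx
  rw [Real.norm_eq_abs, abs_of_pos (inv_pos.2 (by linarith))]
  exact inv_le_one_of_one_le₀ h

section Integral

variable {Ω : Type*} [MeasurableSpace Ω] {μ : Measure Ω} {T : Ω → ℝ}

theorem aestronglyMeasurable_inv_one_add_mul (hT : AEMeasurable T μ) (s : ℝ) :
    AEStronglyMeasurable (fun ω => (1 + s * T ω)⁻¹) μ :=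
  (aemeasurable_const.add (aemeasurable_const.mul hT)).inv.aestronglyMeasurable

theorem integrable_inv_one_add_mul [IsFiniteMeasure μ] (hT : AEMeasurable T μ)
    (hT0 : ∀ᵐ ω ∂μ, 0 ≤ T ω) {s : ℝ} (hs : 0 ≤ s) :
    Integrable (fun ω => (1 + s * T ω)⁻¹) μ :=
  (integrable_const (1 : ℝ)).mono' (aestronglyMeasurable_inv_one_add_mul hT s)
    (hT0.mono fun _ hω => norm_inv_one_add_mul_le_one hs hω)

theorem antitoneOn_integral_inv_one_add_mul [IsFiniteMeasure μ] (hT : AEMeasurable T μ)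
    (hT0 : ∀ᵐ ω ∂μ, 0 ≤ T ω) : AntitoneOn (fun s => ∫ ω, (1 + s * T ω)⁻¹ ∂μ) (Ici 0) :=
  fun s hs t ht hst =>
    integral_mono_ae (integrable_inv_one_add_mul hT hT0 ht) (integrable_inv_one_add_mul hT hT0 hs)
      (hT0.mono fun _ hω => inv_anti₀ (by linarith [one_le_one_add_mul hs hω]) (by gcongr))

theorem continuousOn_integral_inv_one_add_mul [IsFiniteMeasure μ] (hT : AEMeasurable T μ)
    (hT0 : ∀ᵐ ω ∂μ, 0 ≤ T ω) : ContinuousOn (fun s => ∫ ω, (1 + s * T ω)⁻¹ ∂μ) (Ici 0) := by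
  refine continuousOn_of_dominated (bound := fun _ => 1)
    (fun s _ => aestronglyMeasurable_inv_one_add_mul hT s)
    (fun s hs => hT0.mono fun _ hω => norm_inv_one_add_mul_le_one hs hω)
    (integrable_const 1) (hT0.mono fun ω hω => ?_)
  refine ContinuousOn.inv₀ (by fun_prop) fun s hs => ?_
  linarith [one_le_one_add_mul (mem_Ici.1 hs) hω]

end Integral

theorem stmt3_general {Ω : Type*} [MeasureSpace Ω] [IsProbabilityMeasure (volume : Measure Ω)]
    (T : Ω → ℝ) (hTmeas : Measurable T) (hTnonneg : ∀ ω, 0 ≤ T ω)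
    (γ β : ℝ) (hγ : 0 < γ) (hβ : 0 < β) :
    ∃! η : ℝ, η ∈ Set.Ioc (0 : ℝ) 1 ∧
      β * η - ∫ ω, (1 + γ * η * T ω)⁻¹ = β - 1 := by
  have hT0 : ∀ᵐ ω ∂volume, 0 ≤ T ω := ae_of_all _ hTnonneg
  have hscale : MapsTo (γ * ·) (Icc 0 1) (Ici 0) := fun η hη => mul_nonneg hγ.le hη.1
  refine existsUnique_mem_Ioc_mul_sub_eq_sub_one (φ := fun η => ∫ ω, (1 + γ * η * T ω)⁻¹) hβ
    ?_ ?_ (by simp)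
  · exact (continuousOn_integral_inv_one_add_mul hTmeas.aemeasurable hT0).comp
      (continuousOn_const.mul continuousOn_id) hscale
  · exact (antitoneOn_integral_inv_one_add_mul hTmeas.aemeasurable hT0).comp_MonotoneOn
      (fun a _ b _ hab => mul_le_mul_of_nonneg_left hab hγ.le) hscale

/-- For a nonnegative integrable random variable `T`, `γ > 0` and `β > 0`, the equation
`β η - E[1/(1 + γ η T)] = β - 1` has a unique solution `η ∈ (0, 1]`. -/
theorem stmt3 {Ω : Type*} [MeasureSpace Ω] [IsProbabilityMeasure (volume : Measure Ω)]
    (T : Ω → ℝ) (hTmeas : Measurable T) (hTnonneg : ∀ ω, 0 ≤ T ω)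
    (hTint : Integrable T volume) (γ β : ℝ) (hγ : 0 < γ) (hβ : 0 < β) :
    ∃! η : ℝ, η ∈ Set.Ioc (0 : ℝ) 1 ∧
      β * η - ∫ ω, (1 + γ * η * T ω)⁻¹ = β - 1 :=
  stmt3_general T hTmeas hTnonneg γ β hγ hβ
end

section
/- If a random vector λ̄ ∈ ℝ^n has an MTP₂ (multivariate totally positive of order 2) distribution and f, g : ℝ^n → ℝ are both coordinatewise nondecreasing (and square-integrable), then Cov(f(λ̄), g(λ̄)) ≥ 0. -/
open MeasureTheory Filter Topology ProbabilityTheory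
open scoped ENNReal NNReal

/-!
The proof goes through the Ahlswede–Daykin four functions inequality
`(∫ α) (∫ β) ≤ (∫ γ) (∫ δ)`, valid whenever `α x * β y ≤ γ (x ⊔ y) * δ (x ⊓ y)`. On a linear
order it follows by symmetrising the double integral in `(s, t)`; Fubini carries it to products,
hence to `ℝⁿ`, and an MTP₂ density `p` can be absorbed into the four functions. Taking
`α, β, γ, δ = f, g, f g, 1` gives the Harris–FKG inequality `E f * E g ≤ E (f g)` for nonnegative
monotone `f`, `g`; the general case follows by truncating from below, shifting, and dominated
convergence. Monotone functions on `ℝⁿ` need not be Borel, but they agree a.e. with their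
lower semicontinuous left regularization, because upper sets have Lebesgue-null frontier.
-/

theorem ENNReal.add_le_add_of_mul_le_mul {u v P Q : ℝ≥0∞} (hu : u ≤ P) (hv : v ≤ P)
    (huv : u * v ≤ P * Q) : u + v ≤ P + Q := by
  -- `(P - u) (P - v) ≥ 0` gives `P (u + v) ≤ P² + u v ≤ P (P + Q)`.
  rcases le_total v Q with hvQ | hQv
  · exact add_le_add hu hvQ
  rcases eq_or_ne P ⊤ with rfl | hP
  · simp
  lift P to ℝ≥0 using hP
  lift u to ℝ≥0 using ne_top_of_le_ne_top coe_ne_top hu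
  lift v to ℝ≥0 using ne_top_of_le_ne_top coe_ne_top hv
  lift Q to ℝ≥0 using ne_top_of_le_ne_top coe_ne_top hQv
  norm_cast at *
  rw [← NNReal.coe_le_coe] at *
  push_cast at *
  nlinarith [mul_nonneg (sub_nonneg.2 hu) (sub_nonneg.2 hv), u.2, v.2, P.2, Q.2]

def SatisfiesAhlswedeDaykin {E : Type*} [Lattice E] [MeasurableSpace E] (μ : Measure E) : Prop :=
  ∀ α β γ δ : E → ℝ≥0∞, Measurable α → Measurable β → Measurable γ → Measurable δ →
    (∀ x y, α x * β y ≤ γ (x ⊔ y) * δ (x ⊓ y)) →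
    (∫⁻ x, α x ∂μ) * ∫⁻ x, β x ∂μ ≤ (∫⁻ x, γ x ∂μ) * ∫⁻ x, δ x ∂μ

theorem lintegral_lintegral_mul_add_mul_swap {E : Type*} [MeasurableSpace E] (μ : Measure E)
    {F G : E → ℝ≥0∞} (hF : Measurable F) (hG : Measurable G) :
    ∫⁻ s, ∫⁻ t, (F s * G t + F t * G s) ∂μ ∂μ = 2 * ((∫⁻ x, F x ∂μ) * ∫⁻ x, G x ∂μ) := by
  calc ∫⁻ s, ∫⁻ t, (F s * G t + F t * G s) ∂μ ∂μ
      = ∫⁻ s, (F s * ∫⁻ t, G t ∂μ + (∫⁻ t, F t ∂μ) * G s) ∂μ := by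
        refine lintegral_congr fun s => ?_
        rw [lintegral_add_left (hG.const_mul _), lintegral_const_mul _ hG,
          lintegral_mul_const _ hF]
    _ = 2 * ((∫⁻ x, F x ∂μ) * ∫⁻ x, G x ∂μ) := by
        rw [lintegral_add_left (hF.mul_const _), lintegral_mul_const _ hF,
          lintegral_const_mul _ hG, two_mul]

theorem satisfiesAhlswedeDaykin_of_linearOrder {α : Type*} [LinearOrder α] [MeasurableSpace α]
    (μ : Measure α) : SatisfiesAhlswedeDaykin μ := by
  intro a b c d ha hb hc hd h
  have pointwise : ∀ s t, a s * b t + a t * b s ≤ c s * d t + c t * d s := by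
    intro s t
    wlog hts : t ≤ s generalizing s t
    · rw [add_comm, add_comm (c s * d t)]
      exact this t s (le_of_not_ge hts)
    refine ENNReal.add_le_add_of_mul_le_mul (by simpa [hts] using h s t)
      (by simpa [hts] using h t s) ?_
    calc a s * b t * (a t * b s) = (a s * b s) * (a t * b t) := by ring
      _ ≤ (c s * d s) * (c t * d t) := mul_le_mul' (by simpa using h s s) (by simpa using h t t)
      _ = c s * d t * (c t * d s) := by ring
  rw [← ENNReal.mul_le_mul_iff_right two_ne_zero ENNReal.ofNat_ne_top,
    ← lintegral_lintegral_mul_add_mul_swap μ ha hb, ← lintegral_lintegral_mul_add_mul_swap μ hc hd]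
  exact lintegral_mono fun s => lintegral_mono (pointwise s)

namespace SatisfiesAhlswedeDaykin

variable {E F : Type*} [Lattice E] [Lattice F] [MeasurableSpace E] [MeasurableSpace F]
  {μ : Measure E} {ν : Measure F}

theorem prod [SFinite ν] (hμ : SatisfiesAhlswedeDaykin μ) (hν : SatisfiesAhlswedeDaykin ν) :
    SatisfiesAhlswedeDaykin (μ.prod ν) := by
  intro a b c d ha hb hc hd h
  rw [lintegral_prod _ ha.aemeasurable, lintegral_prod _ hb.aemeasurable,
    lintegral_prod _ hc.aemeasurable, lintegral_prod _ hd.aemeasurable]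
  refine hμ _ _ _ _ ha.lintegral_prod_right' hb.lintegral_prod_right' hc.lintegral_prod_right'
    hd.lintegral_prod_right' fun x x' => ?_
  exact hν _ _ _ _ (ha.comp measurable_prodMk_left) (hb.comp measurable_prodMk_left)
    (hc.comp measurable_prodMk_left) (hd.comp measurable_prodMk_left)
    fun y y' => h (x, y) (x', y')

theorem of_orderIso (e : F ≃o E) (he : MeasurePreserving e ν μ)
    (hν : SatisfiesAhlswedeDaykin ν) : SatisfiesAhlswedeDaykin μ := by
  intro a b c d ha hb hc hd h
  rw [← he.lintegral_comp ha, ← he.lintegral_comp hb, ← he.lintegral_comp hc,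
    ← he.lintegral_comp hd]
  refine hν _ _ _ _ (ha.comp he.measurable) (hb.comp he.measurable) (hc.comp he.measurable)
    (hd.comp he.measurable) fun x y => ?_
  simpa only [Function.comp_apply, e.map_sup, e.map_inf] using h (e x) (e y)

theorem withDensity (hμ : SatisfiesAhlswedeDaykin μ) {p : E → ℝ≥0∞} (hp : Measurable p)
    (hMTP2 : ∀ x y, p x * p y ≤ p (x ⊔ y) * p (x ⊓ y)) :
    SatisfiesAhlswedeDaykin (μ.withDensity p) := by
  intro a b c d ha hb hc hd h
  rw [lintegral_withDensity_eq_lintegral_mul _ hp ha,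
    lintegral_withDensity_eq_lintegral_mul _ hp hb,
    lintegral_withDensity_eq_lintegral_mul _ hp hc,
    lintegral_withDensity_eq_lintegral_mul _ hp hd]
  refine hμ _ _ _ _ (hp.mul ha) (hp.mul hb) (hp.mul hc) (hp.mul hd) fun x y => ?_
  calc p x * a x * (p y * b y) = (p x * p y) * (a x * b y) := by ring
    _ ≤ (p (x ⊔ y) * p (x ⊓ y)) * (c (x ⊔ y) * d (x ⊓ y)) := mul_le_mul' (hMTP2 x y) (h x y)
    _ = p (x ⊔ y) * c (x ⊔ y) * (p (x ⊓ y) * d (x ⊓ y)) := by ring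

end SatisfiesAhlswedeDaykin

theorem satisfiesAhlswedeDaykin_dirac {E : Type*} [Lattice E] [MeasurableSpace E] (x : E) :
    SatisfiesAhlswedeDaykin (Measure.dirac x) := by
  intro a b c d ha hb hc hd h
  simpa [lintegral_dirac' x ha, lintegral_dirac' x hb, lintegral_dirac' x hc,
    lintegral_dirac' x hd] using h x x

theorem satisfiesAhlswedeDaykin_pi : ∀ {n : ℕ} {α : Fin n → Type*} [∀ i, LinearOrder (α i)]
    [∀ i, MeasurableSpace (α i)] (μ : ∀ i, Measure (α i)) [∀ i, SigmaFinite (μ i)],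
    SatisfiesAhlswedeDaykin (Measure.pi μ)
  | 0, _, _, _, μ, _ => by
    rw [Measure.pi_of_empty μ]
    exact satisfiesAhlswedeDaykin_dirac _
  | n + 1, α, _, _, μ, _ => by
    refine SatisfiesAhlswedeDaykin.of_orderIso (Fin.insertNthOrderIso α 0)
      (measurePreserving_piFinSuccAbove μ 0).symm ?_
    exact (satisfiesAhlswedeDaykin_of_linearOrder _).prod (satisfiesAhlswedeDaykin_pi _)

namespace SatisfiesAhlswedeDaykin

variable {E : Type*} [Lattice E] [MeasurableSpace E] {μ : Measure E}

theorem lintegral_mul_le (hμ : SatisfiesAhlswedeDaykin μ) {F G : E → ℝ≥0∞} (hFm : Measurable F)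
    (hGm : Measurable G) (hF : Monotone F) (hG : Monotone G) :
    (∫⁻ x, F x ∂μ) * ∫⁻ x, G x ∂μ ≤ (∫⁻ x, F x * G x ∂μ) * μ Set.univ := by
  simpa using hμ F G (fun x => F x * G x) 1 hFm hGm (hFm.mul hGm) measurable_const
    fun x y => by simpa using mul_le_mul' (hF le_sup_left) (hG le_sup_right)

theorem covariance_nonneg_of_nonneg [IsProbabilityMeasure μ] (hμ : SatisfiesAhlswedeDaykin μ)
    {F G : E → ℝ} (hFm : Measurable F) (hGm : Measurable G) (hF : Monotone F) (hG : Monotone G)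
    (hF0 : 0 ≤ F) (hG0 : 0 ≤ G) (hF2 : MemLp F 2 μ) (hG2 : MemLp G 2 μ) :
    0 ≤ cov[F, G; μ] := by
  have h := hμ.lintegral_mul_le hFm.ennreal_ofReal hGm.ennreal_ofReal
    (fun _ _ h => ENNReal.ofReal_le_ofReal (hF h)) (fun _ _ h => ENNReal.ofReal_le_ofReal (hG h))
  simp only [← ENNReal.ofReal_mul (hF0 _)] at h
  rw [← ofReal_integral_eq_lintegral_ofReal (hF2.integrable one_le_two) (ae_of_all _ hF0),
    ← ofReal_integral_eq_lintegral_ofReal (hG2.integrable one_le_two) (ae_of_all _ hG0),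
    ← ofReal_integral_eq_lintegral_ofReal (f := fun x => F x * G x)
      (hF2.integrable_mul hG2)
      (ae_of_all _ fun x => mul_nonneg (hF0 x) (hG0 x)),
    measure_univ, mul_one, ← ENNReal.ofReal_mul (integral_nonneg hF0),
    ENNReal.ofReal_le_ofReal_iff (integral_nonneg fun x => mul_nonneg (hF0 x) (hG0 x))] at h
  rw [covariance_eq_sub hF2 hG2, sub_nonneg]
  exact h

end SatisfiesAhlswedeDaykin

theorem abs_max_neg_le {a c : ℝ} (hc : 0 ≤ c) : |max a (-c)| ≤ |a| := by
  rcases le_total (-c) a with h | h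
  · rw [max_eq_left h]
  · rw [max_eq_right h, abs_neg, abs_of_nonneg hc]
    exact le_trans (by linarith) (neg_le_abs a)

theorem tendsto_max_neg_natCast (a : ℝ) : Tendsto (fun k : ℕ => max a (-k)) atTop (𝓝 a) := by
  refine tendsto_const_nhds.congr' ?_
  filter_upwards [tendsto_natCast_atTop_atTop.eventually_ge_atTop (-a)] with k hk
  rw [max_eq_left (by linarith)]

section Covariance

variable {Ω : Type*} [MeasurableSpace Ω] {μ : Measure Ω} {f g : Ω → ℝ}

theorem MeasureTheory.MemLp.max_neg {p : ℝ≥0∞} (hf : MemLp f p μ) {c : ℝ} (hc : 0 ≤ c) :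
    MemLp (fun x => max (f x) (-c)) p μ :=
  hf.mono (hf.1.sup aestronglyMeasurable_const) (ae_of_all _ fun _ => abs_max_neg_le hc)

theorem tendsto_integral_max_neg (hf : Integrable f μ) :
    Tendsto (fun k : ℕ => ∫ x, max (f x) (-k) ∂μ) atTop (𝓝 (∫ x, f x ∂μ)) :=
  tendsto_integral_of_dominated_convergence _
    (fun _ => hf.1.sup aestronglyMeasurable_const) hf.norm
    (fun k => ae_of_all _ fun _ => abs_max_neg_le k.cast_nonneg)
    (ae_of_all _ fun x => tendsto_max_neg_natCast (f x))

theorem tendsto_integral_max_neg_mul_max_neg (hfg : Integrable (f * g) μ)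
    (hf : AEStronglyMeasurable f μ) (hg : AEStronglyMeasurable g μ) :
    Tendsto (fun k : ℕ => ∫ x, max (f x) (-k) * max (g x) (-k) ∂μ) atTop
      (𝓝 (∫ x, f x * g x ∂μ)) :=
  tendsto_integral_of_dominated_convergence _
    (fun _ => (hf.sup aestronglyMeasurable_const).mul (hg.sup aestronglyMeasurable_const))
    hfg.norm
    (fun k => ae_of_all _ fun x => by
      simpa only [norm_mul, Real.norm_eq_abs, Pi.mul_apply] using mul_le_mul
        (abs_max_neg_le k.cast_nonneg) (abs_max_neg_le k.cast_nonneg) (abs_nonneg _)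
        (abs_nonneg _))
    (ae_of_all _ fun x => (tendsto_max_neg_natCast (f x)).mul (tendsto_max_neg_natCast (g x)))

theorem tendsto_covariance_max_neg [IsProbabilityMeasure μ] (hf : MemLp f 2 μ)
    (hg : MemLp g 2 μ) :
    Tendsto (fun k : ℕ => cov[fun x => max (f x) (-k), fun x => max (g x) (-k); μ]) atTop
      (𝓝 cov[f, g; μ]) := by
  have hcov : (fun k : ℕ => cov[fun x => max (f x) (-k), fun x => max (g x) (-k); μ]) =
      fun k : ℕ => (∫ x, max (f x) (-k) * max (g x) (-k) ∂μ) -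
        (∫ x, max (f x) (-k) ∂μ) * ∫ x, max (g x) (-k) ∂μ :=
    funext fun k => covariance_eq_sub (hf.max_neg k.cast_nonneg) (hg.max_neg k.cast_nonneg)
  rw [hcov, covariance_eq_sub hf hg]
  exact (tendsto_integral_max_neg_mul_max_neg (hf.integrable_mul hg) hf.1 hg.1).sub
    ((tendsto_integral_max_neg (hf.integrable one_le_two)).mul
      (tendsto_integral_max_neg (hg.integrable one_le_two)))

theorem ProbabilityTheory.covariance_congr {f' g' : Ω → ℝ} (hf : f =ᵐ[μ] f') (hg : g =ᵐ[μ] g') :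
    cov[f, g; μ] = cov[f', g'; μ] := by
  unfold covariance
  rw [integral_congr_ae hf, integral_congr_ae hg]
  refine integral_congr_ae ?_
  filter_upwards [hf, hg] with x hfx hgx
  rw [hfx, hgx]

end Covariance

theorem SatisfiesAhlswedeDaykin.covariance_nonneg {E : Type*} [Lattice E] [MeasurableSpace E]
    {μ : Measure E} [IsProbabilityMeasure μ] (hμ : SatisfiesAhlswedeDaykin μ) {f g : E → ℝ}
    (hfm : Measurable f) (hgm : Measurable g) (hf : Monotone f) (hg : Monotone g)
    (hf2 : MemLp f 2 μ) (hg2 : MemLp g 2 μ) : 0 ≤ cov[f, g; μ] := by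
  refine ge_of_tendsto' (tendsto_covariance_max_neg hf2 hg2) fun k => ?_
  have hfk := hf2.max_neg k.cast_nonneg
  have hgk := hg2.max_neg k.cast_nonneg
  rw [← covariance_add_const_left (hfk.integrable one_le_two) k,
    ← covariance_add_const_right (hgk.integrable one_le_two) k]
  refine hμ.covariance_nonneg_of_nonneg ((hfm.max measurable_const).add_const _)
    ((hgm.max measurable_const).add_const _) ((hf.max monotone_const).add_const _)
    ((hg.max monotone_const).add_const _)
    (fun x => neg_le_iff_add_nonneg.1 (le_max_right (f x) _))
    (fun x => neg_le_iff_add_nonneg.1 (le_max_right (g x) _))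
    (hfk.add (memLp_const _)) (hgk.add (memLp_const _))

section LeftRegularization

variable {ι : Type*}

theorem exists_strongLT_mem_of_mem_nhds {x : ι → ℝ} {U : Set (ι → ℝ)} (hU : U ∈ 𝓝 x) :
    ∃ y ∈ U, StrongLT y x := by
  have hlim : Tendsto (fun t : ℝ => fun i => x i - t) (𝓝[>] 0) (𝓝 x) := by
    have : Continuous fun t : ℝ => fun i => x i - t := by fun_prop
    simpa using (this.tendsto 0).mono_left nhdsWithin_le_nhds
  obtain ⟨t, htU, ht⟩ := ((hlim.eventually hU).and self_mem_nhdsWithin).exists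
  exact ⟨_, htU, fun i => sub_lt_self _ ht⟩

theorem eventually_strongLT_nhds [Finite ι] {x y : ι → ℝ} (h : StrongLT y x) :
    ∀ᶠ z in 𝓝 x, StrongLT y z :=
  eventually_all.2 fun i => (continuous_apply i).continuousAt.eventually (eventually_gt_nhds (h i))

noncomputable def leftRegularization (f : (ι → ℝ) → ℝ) (x : ι → ℝ) : ℝ :=
  sSup (f '' {y | StrongLT y x})

theorem nonempty_image_setOf_strongLT (f : (ι → ℝ) → ℝ) (x : ι → ℝ) :
    (f '' {y | StrongLT y x}).Nonempty :=
  ⟨_, (fun i => x i - 1), fun i => sub_one_lt (x i), rfl⟩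

namespace Monotone

variable {f : (ι → ℝ) → ℝ}

theorem le_leftRegularization (hf : Monotone f) {x y : ι → ℝ} (h : StrongLT y x) :
    f y ≤ leftRegularization f x :=
  le_csSup ⟨f x, Set.forall_mem_image.2 fun _ hz => hf hz.le⟩ ⟨y, h, rfl⟩

theorem leftRegularization_le (hf : Monotone f) (x : ι → ℝ) : leftRegularization f x ≤ f x :=
  csSup_le (nonempty_image_setOf_strongLT f x) (Set.forall_mem_image.2 fun _ hy => hf hy.le)

theorem monotone_leftRegularization (hf : Monotone f) : Monotone (leftRegularization f) :=
  fun x _ hxx' => csSup_le (nonempty_image_setOf_strongLT f x) <|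
    Set.forall_mem_image.2 fun _ hy => hf.le_leftRegularization fun i => (hy i).trans_le (hxx' i)

theorem lowerSemicontinuous_leftRegularization [Finite ι] (hf : Monotone f) :
    LowerSemicontinuous (leftRegularization f) := by
  intro x c hc
  obtain ⟨_, ⟨y, hyx, rfl⟩, hcy⟩ := exists_lt_of_lt_csSup
    (nonempty_image_setOf_strongLT f x) hc
  filter_upwards [eventually_strongLT_nhds hyx] with z hyz
  exact hcy.trans_le (hf.le_leftRegularization hyz)

theorem measurable_leftRegularization [Finite ι] (hf : Monotone f) :
    Measurable (leftRegularization f) :=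
  hf.lowerSemicontinuous_leftRegularization.measurable

-- Where `f` exceeds its left regularization, `x` lies on the frontier of a superlevel set
-- `{f > c}` with rational `c`; these are upper sets, and upper sets have null frontier.
theorem leftRegularization_ae_eq [Fintype ι] (hf : Monotone f) :
    leftRegularization f =ᵐ[volume] f := by
  refine ae_iff.2 (measure_mono_null (t := ⋃ c : ℚ, frontier {y | (c : ℝ) < f y}) ?_
    (measure_iUnion_null fun c => IsUpperSet.null_frontier fun _ _ hab ha => ha.trans_le (hf hab)))
  intro x hx
  obtain ⟨c, hxc, hcx⟩ := exists_rat_btwn ((hf.leftRegularization_le x).lt_of_ne hx)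
  refine Set.mem_iUnion.2 ⟨c, ?_⟩
  rw [← closure_sdiff_interior]
  refine ⟨subset_closure hcx, fun hint => ?_⟩
  obtain ⟨y, hcy, hyx⟩ := exists_strongLT_mem_of_mem_nhds (mem_interior_iff_mem_nhds.1 hint)
  exact (hxc.trans ((hcy : (c : ℝ) < f y).trans_le
    (hf.le_leftRegularization hyx))).false

end Monotone

end LeftRegularization

/-- If a random vector in `ℝⁿ` has an MTP₂ density `p` (i.e.
`p x * p y ≤ p (x ⊔ y) * p (x ⊓ y)` for coordinatewise max/min) and `f`, `g` are
coordinatewise nondecreasing square-integrable functions, then `Cov(f, g) ≥ 0`. -/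
theorem stmt11 {n : ℕ} (p : (Fin n → ℝ) → ℝ) (hp : ∀ x, 0 ≤ p x) (hpmeas : Measurable p)
    (μ : Measure (Fin n → ℝ))
    (hμ : μ = volume.withDensity fun x => ENNReal.ofReal (p x))
    (hprob : IsProbabilityMeasure μ)
    (hMTP2 : ∀ x y : Fin n → ℝ, p x * p y ≤ p (x ⊔ y) * p (x ⊓ y))
    (f g : (Fin n → ℝ) → ℝ) (hf : Monotone f) (hg : Monotone g)
    (hf2 : MemLp f 2 μ) (hg2 : MemLp g 2 μ) :
    0 ≤ ∫ x, f x * g x ∂μ - (∫ x, f x ∂μ) * ∫ x, g x ∂μ := by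
  have hac : μ ≪ volume := hμ ▸ withDensity_absolutelyContinuous _ _
  have hf₀ : leftRegularization f =ᵐ[μ] f := hac.ae_eq hf.leftRegularization_ae_eq
  have hg₀ : leftRegularization g =ᵐ[μ] g := hac.ae_eq hg.leftRegularization_ae_eq
  have hAD : SatisfiesAhlswedeDaykin μ := by
    rw [hμ]
    refine (satisfiesAhlswedeDaykin_pi fun _ => volume).withDensity hpmeas.ennreal_ofReal
      fun x y => ?_
    rw [← ENNReal.ofReal_mul (hp x), ← ENNReal.ofReal_mul (hp _)]
    exact ENNReal.ofReal_le_ofReal (hMTP2 x y)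
  have hcov := hAD.covariance_nonneg hf.measurable_leftRegularization
    hg.measurable_leftRegularization hf.monotone_leftRegularization
    hg.monotone_leftRegularization (hf2.ae_eq hf₀.symm) (hg2.ae_eq hg₀.symm)
  rwa [covariance_congr hf₀ hg₀, covariance_eq_sub hf2 hg2] at hcov
end
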